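/- Let S be a set of n ≥ 2 points in general position in the plane. Then there are at least 2^{n−1} generalized peeling paths on S, counted as oriented plane spanning paths. -/

import Mathlib

open Set

/-- Points of the plane. -/
abbrev Pt : Type := ℝ × ℝ

/-- Two straight segments cross if their relative interiors (open segments) share a point. -/
def SegCross (a b c d : Pt) : Prop :=
  (openSegment ℝ a b ∩ openSegment ℝ c d).Nonempty

/-- A finite point set is in general position if no three of its points are collinear. -/
def GeneralPosition (S : Finset Pt) : Prop :=
  ∀ a ∈ S, ∀ b ∈ S, ∀ c ∈ S, a ≠ b → a ≠ c → b ≠ c → ¬ Collinear ℝ ({a, b, c} : Set Pt)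

/-- A finite point set is in convex position: it is in general position and every point is an
extreme point of the convex hull (it is not in the convex hull of the other points). -/
def ConvexPosition (S : Finset Pt) : Prop :=
  GeneralPosition S ∧ ∀ x ∈ S, x ∉ convexHull ℝ ((S : Set Pt) \ {x})

/-- Orientation determinant of the triple `a b c`. -/
noncomputable def det2 (a b c : Pt) : ℝ :=
  (b.1 - a.1) * (c.2 - a.2) - (b.2 - a.2) * (c.1 - a.1)

/-- For a point set `T` in general position, the segment `ab` is an edge of the boundary of the
convex hull of `T` iff all other points of `T` lie strictly on one side of the line `ab`. -/
def HullEdge (T : Set Pt) (a b : Pt) : Prop :=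
  a ∈ T ∧ b ∈ T ∧ a ≠ b ∧
    ((∀ x ∈ T, x ≠ a → x ≠ b → 0 < det2 a b x) ∨ (∀ x ∈ T, x ≠ a → x ≠ b → det2 a b x < 0))

/-- `a` is a vertex (extreme point) of the convex hull of `T`. -/
def HullVertex (T : Set Pt) (a : Pt) : Prop :=
  a ∈ T ∧ a ∉ convexHull ℝ (T \ {a})

/-- A plane spanning tree on a finite point set `S`: a tree with vertex set `S` whose
edges, drawn as straight segments, pairwise do not cross. -/
structure PlaneTree (S : Finset Pt) where
  graph : SimpleGraph {x : Pt // x ∈ S}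
  isTree : graph.IsTree
  noncross : ∀ a b c d : {x : Pt // x ∈ S}, graph.Adj a b → graph.Adj c d →
    s(a, b) ≠ s(c, d) → ¬ SegCross a.1 b.1 c.1 d.1

/-- A vertex of a graph is a leaf if it has exactly one neighbour. -/
def IsLeafV {V : Type*} (G : SimpleGraph V) (v : V) : Prop :=
  (G.neighborSet v).ncard = 1

/-- A graph is a path graph (possibly empty or a single vertex) if its vertices can be
enumerated so that adjacency is exactly consecutiveness. -/
def IsPathGraph {V : Type*} (G : SimpleGraph V) : Prop :=
  ∃ (n : ℕ) (f : Fin n ≃ V), ∀ i j : Fin n, G.Adj (f i) (f j) ↔ (i.1 + 1 = j.1 ∨ j.1 + 1 = i.1)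

/-- A caterpillar: a tree in which the non-leaf vertices induce a path
(possibly empty or a single vertex), called the spine. -/
def IsCaterpillar {V : Type*} (G : SimpleGraph V) : Prop :=
  G.IsTree ∧ IsPathGraph (G.induce {v : V | ¬ IsLeafV G v})

/-- A plane spanning caterpillar on `S`. -/
structure PlaneCaterpillar (S : Finset Pt) extends PlaneTree S where
  isCaterpillar : IsCaterpillar graph

/-- A plane spanning path on `S`. -/
structure PlanePath (S : Finset Pt) extends PlaneTree S where
  isPath : IsPathGraph graph

/-- The (closed) triangle spanned by `a`, `b`, `c` contains no point of `S` besides `a,b,c`. -/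
def EmptyTriangle (S : Finset Pt) (a b c : Pt) : Prop :=
  ∀ x ∈ S, x ∈ convexHull ℝ ({a, b, c} : Set Pt) → x = a ∨ x = b ∨ x = c

/-- One caterpillar is obtained from another by a slide: `E₂ = (E₁ \ {ab}) ∪ {ac}` where the
triangle `abc` contains no other point of `S` and `bc ∈ E₁ ∩ E₂`. -/
def SlideAux {S : Finset Pt} (C₁ C₂ : PlaneCaterpillar S) : Prop :=
  ∃ a b c : {x : Pt // x ∈ S},
    C₁.graph.Adj a b ∧ C₁.graph.Adj b c ∧ C₂.graph.Adj b c ∧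
    EmptyTriangle S a.1 b.1 c.1 ∧
    C₂.graph.edgeSet = (C₁.graph.edgeSet \ {s(a, b)}) ∪ {s(a, c)}

/-- The (symmetric) slide relation: the edge relation of the slide graph `G_C^slide(S)`. -/
def Slide {S : Finset Pt} (C₁ C₂ : PlaneCaterpillar S) : Prop :=
  SlideAux C₁ C₂ ∨ SlideAux C₂ C₁

/-- A sequence of `m` slides transforming `C₁` into `C₂`. -/
def SlideSeq {S : Finset Pt} (m : ℕ) (C₁ C₂ : PlaneCaterpillar S) : Prop :=
  ∃ g : ℕ → PlaneCaterpillar S, g 0 = C₁ ∧ g m = C₂ ∧ ∀ i < m, Slide (g i) (g (i + 1))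

/-- Rotation: `E₂ = (E₁ \ {ab}) ∪ {ac}` for distinct edges `ab`, `ac` sharing the endpoint `a`. -/
def RotationAux {S : Finset Pt} (C₁ C₂ : PlaneCaterpillar S) : Prop :=
  ∃ a b c : {x : Pt // x ∈ S}, b ≠ c ∧ C₁.graph.Adj a b ∧
    C₂.graph.edgeSet = (C₁.graph.edgeSet \ {s(a, b)}) ∪ {s(a, c)}

/-- The (symmetric) rotation relation: the edge relation of the rotation graph `G_C^rot(S)`. -/
def Rotation {S : Finset Pt} (C₁ C₂ : PlaneCaterpillar S) : Prop :=
  RotationAux C₁ C₂ ∨ RotationAux C₂ C₁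

/-- Flip of caterpillars: `E₂ = (E₁ \ {e}) ∪ {f}` for edges `e = ab`, `f = cd`. -/
def CatFlipAux {S : Finset Pt} (C₁ C₂ : PlaneCaterpillar S) : Prop :=
  ∃ a b c d : {x : Pt // x ∈ S}, C₁.graph.Adj a b ∧ C₂.graph.Adj c d ∧
    C₂.graph.edgeSet = (C₁.graph.edgeSet \ {s(a, b)}) ∪ {s(c, d)}

/-- The (symmetric) flip relation on caterpillars: edge relation of `G_C^flip(S)`. -/
def CatFlip {S : Finset Pt} (C₁ C₂ : PlaneCaterpillar S) : Prop :=
  CatFlipAux C₁ C₂ ∨ CatFlipAux C₂ C₁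

/-- Compatible flip of caterpillars: a flip whose two exchanged edges do not cross. -/
def CatCompFlipAux {S : Finset Pt} (C₁ C₂ : PlaneCaterpillar S) : Prop :=
  ∃ a b c d : {x : Pt // x ∈ S}, C₁.graph.Adj a b ∧ C₂.graph.Adj c d ∧
    ¬ SegCross a.1 b.1 c.1 d.1 ∧
    C₂.graph.edgeSet = (C₁.graph.edgeSet \ {s(a, b)}) ∪ {s(c, d)}

/-- The (symmetric) compatible flip relation: edge relation of `G_C^comp-flip(S)`. -/
def CatCompFlip {S : Finset Pt} (C₁ C₂ : PlaneCaterpillar S) : Prop :=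
  CatCompFlipAux C₁ C₂ ∨ CatCompFlipAux C₂ C₁

/-- The spanning star on `S` with center `x`. -/
def starGraph (S : Finset Pt) (x : {p : Pt // p ∈ S}) : SimpleGraph {p : Pt // p ∈ S} where
  Adj a b := a ≠ b ∧ (a = x ∨ b = x)
  symm := ⟨fun a b h => ⟨h.1.symm, h.2.symm⟩⟩
  loopless := ⟨fun a h => h.1 rfl⟩

/-- `s` is an endpoint of the spine of the caterpillar `C`: it is a non-leaf vertex having at
most one non-leaf neighbour. -/
def SpineEndpoint {S : Finset Pt} (C : PlaneCaterpillar S) (s : {p : Pt // p ∈ S}) : Prop :=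
  ¬ IsLeafV C.graph s ∧
    ∀ w w' : {p : Pt // p ∈ S}, C.graph.Adj s w → C.graph.Adj s w' →
      ¬ IsLeafV C.graph w → ¬ IsLeafV C.graph w' → w = w'

/-- `C` is a double star with centers `u` and `v`: it contains the edge `uv` and every other
vertex is a leaf adjacent to `u` or to `v`. -/
def IsDoubleStar {S : Finset Pt} (C : PlaneCaterpillar S) (u v : {p : Pt // p ∈ S}) : Prop :=
  C.graph.Adj u v ∧ ∀ w : {p : Pt // p ∈ S}, w ≠ u → w ≠ v →
    IsLeafV C.graph w ∧ (C.graph.Adj u w ∨ C.graph.Adj v w)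

/-- The points of `S` remaining after removing `v 0, …, v (i-1)`. -/
def PeelRest (S : Finset Pt) (v : ℕ → Pt) (i : ℕ) : Set Pt :=
  {x : Pt | x ∈ S ∧ ∀ j < i, v j ≠ x}

/-- `v 0, …, v (n-1)` is a generalized peeling path on `S`: an orientation of a plane spanning
path such that `v 0` is a hull vertex of `S` and each subsequent `v i` is a hull vertex of the
set of remaining points, with the segment from `v (i-1)` not crossing any edge of the hull of
the remaining points. -/
def IsGenPeelingSeq (S : Finset Pt) (n : ℕ) (v : ℕ → Pt) : Prop :=
  (∀ i < n, v i ∈ S) ∧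
  (∀ i < n, ∀ j < n, v i = v j → i = j) ∧
  (∀ x ∈ S, ∃ i < n, v i = x) ∧
  (∀ i j : ℕ, i + 1 < n → j + 1 < n → i ≠ j →
    ¬ SegCross (v i) (v (i + 1)) (v j) (v (j + 1))) ∧
  HullVertex (S : Set Pt) (v 0) ∧
  (∀ i : ℕ, 0 < i → i < n →
    HullVertex (PeelRest S v i) (v i) ∧
    ∀ a b : Pt, HullEdge (PeelRest S v i) a b → ¬ SegCross (v (i - 1)) (v i) a b)

/-- A plane spanning path admits an orientation making it a generalized peeling path. -/
def IsPeelingPath {S : Finset Pt} (P : PlanePath S) : Prop :=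
  ∃ v : ℕ → Pt, IsGenPeelingSeq S S.card v ∧
    ∀ a b : {x : Pt // x ∈ S}, P.graph.Adj a b ↔
      ∃ i : ℕ, i + 1 < S.card ∧
        ((v i = a.1 ∧ v (i + 1) = b.1) ∨ (v i = b.1 ∧ v (i + 1) = a.1))

/-- Flip of plane spanning paths: `E₂ = (E₁ \ {e}) ∪ {f}` for edges `e = ab`, `f = cd`. -/
def PathFlipAux {S : Finset Pt} (P Q : PlanePath S) : Prop :=
  ∃ a b c d : {x : Pt // x ∈ S}, P.graph.Adj a b ∧ Q.graph.Adj c d ∧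
    Q.graph.edgeSet = (P.graph.edgeSet \ {s(a, b)}) ∪ {s(c, d)}

/-- The flip graph `G_P(S)` of plane spanning paths on `S`. -/
def flipGraph (S : Finset Pt) : SimpleGraph (PlanePath S) where
  Adj P Q := P ≠ Q ∧ (PathFlipAux P Q ∨ PathFlipAux Q P)
  symm := ⟨fun P Q h => ⟨h.1.symm, h.2.symm⟩⟩
  loopless := ⟨fun P h => h.1 rfl⟩

/-- The point `u` is an endpoint of the plane spanning path `P`. -/
def IsPathEndpoint {S : Finset Pt} (P : PlanePath S) (u : Pt) : Prop :=
  ∃ hu : u ∈ S, IsLeafV P.graph ⟨u, hu⟩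

/-- The subgraph `G_P^u(S)` of the flip graph induced by the paths with endpoint `u`. -/
def flipGraphU (S : Finset Pt) (u : Pt) :
    SimpleGraph {P : PlanePath S // IsPathEndpoint P u} where
  Adj P Q := (flipGraph S).Adj P.1 Q.1
  symm := ⟨fun P Q h => (flipGraph S).adj_symm h⟩
  loopless := ⟨fun P h => (flipGraph S).irrefl h⟩

/-- A caterpillar is well-separated: there is an enumeration `f 0, …, f (k-1)` of its spine
(the non-leaf vertices, in path order) such that for every `i` the convex hull of the set
`S_{1,i}` of the first `i+1` spine vertices together with their leaves contains no other
point of `S`. -/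
def WellSeparated {S : Finset Pt} (C : PlaneCaterpillar S) : Prop :=
  ∃ (k : ℕ) (f : Fin k → {x : Pt // x ∈ S}),
    Function.Injective f ∧
    (∀ w : {x : Pt // x ∈ S}, ¬ IsLeafV C.graph w ↔ ∃ i : Fin k, f i = w) ∧
    (∀ i j : Fin k, C.graph.Adj (f i) (f j) ↔ (i.1 + 1 = j.1 ∨ j.1 + 1 = i.1)) ∧
    (∀ i : Fin k, ∀ x : {x : Pt // x ∈ S},
      (x : Pt) ∈ convexHull ℝ {p : Pt | ∃ (j : Fin k) (w : {x : Pt // x ∈ S}),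
        j ≤ i ∧ p = (w : Pt) ∧ (w = f j ∨ (C.graph.Adj (f j) w ∧ IsLeafV C.graph w))} →
      ∃ (j : Fin k) (w : {x : Pt // x ∈ S}),
        j ≤ i ∧ (x : Pt) = (w : Pt) ∧ (w = f j ∨ (C.graph.Adj (f j) w ∧ IsLeafV C.graph w)))

/-!
Peel along the convex hull. Start at a hull vertex of `S`; from the current vertex `v`, a hull
vertex of the set `T` of unpeeled points, move to one of the two neighbours `w` of `v` on the
hull of `T`. Then `w` is a hull vertex of `T \ {v}`, and since `vw` is a hull edge of `T`, every
segment between points of `T \ {v}` lies weakly on one side of the line `vw` and cannot cross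
`vw`. There are two choices for the start and two at each of the next `n - 2` steps, and
different choices give different paths.
-/

@[simp] lemma det2_self_left (p q : Pt) : det2 p q p = 0 := by
  simp only [det2]; ring

@[simp] lemma det2_self_right (p q : Pt) : det2 p q q = 0 := by
  simp only [det2]; ring

lemma det2_swap (p q x : Pt) : det2 q p x = -det2 p q x := by
  simp only [det2]; ring

lemma det2_smul_add_smul (p q x y : Pt) {a b : ℝ} (hab : a + b = 1) :
    det2 p q (a • x + b • y) = a * det2 p q x + b * det2 p q y := by
  obtain rfl : b = 1 - a := by linarith
  simp only [det2, Prod.fst_add, Prod.snd_add, Prod.smul_fst, Prod.smul_snd, smul_eq_mul]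
  ring

lemma det2_eq_zero_of_mem_openSegment {p q x : Pt} (hx : x ∈ openSegment ℝ p q) :
    det2 p q x = 0 := by
  obtain ⟨a, b, -, -, hab, rfl⟩ := hx
  simp [det2_smul_add_smul p q p q hab]

lemma convex_setOf_det2_pos (p q : Pt) : Convex ℝ {x : Pt | 0 < det2 p q x} := by
  intro x hx y hy a b ha hb hab
  simp only [Set.mem_ofPred_eq, det2_smul_add_smul p q x y hab] at *
  nlinarith [mul_nonneg ha hx.le, mul_nonneg hb hy.le, mul_pos hx hy]

lemma not_segCross_of_det2_mul_nonneg {p q c d : Pt} (hcd : 0 ≤ det2 p q c * det2 p q d)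
    (hne : det2 p q c ≠ 0) : ¬ SegCross p q c d := by
  rintro ⟨x, hx, a, b, ha, hb, hab, rfl⟩
  have h0 := det2_eq_zero_of_mem_openSegment hx
  rw [det2_smul_add_smul p q c d hab] at h0
  have h1 : a * det2 p q c ^ 2 + b * (det2 p q c * det2 p q d) = 0 := by
    linear_combination det2 p q c * h0
  have : 0 < a * det2 p q c ^ 2 := by positivity
  nlinarith [mul_nonneg hb.le hcd]

lemma segCross_comm {a b c d : Pt} : SegCross a b c d ↔ SegCross c d a b := by
  rw [SegCross, SegCross, Set.inter_comm]

lemma segCross_swap_right {a b c d : Pt} : SegCross a b c d ↔ SegCross a b d c := by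
  rw [SegCross, SegCross, openSegment_symm ℝ c d]

lemma collinear_of_det2_eq_zero {v x w : Pt} (hx : x ≠ v) (h : det2 v x w = 0) :
    Collinear ℝ ({v, x, w} : Set Pt) := by
  have hN : (x.1 - v.1) ^ 2 + (x.2 - v.2) ^ 2 ≠ 0 := by
    intro h0
    exact hx (Prod.ext (by nlinarith [sq_nonneg (x.1 - v.1), sq_nonneg (x.2 - v.2)])
      (by nlinarith [sq_nonneg (x.1 - v.1), sq_nonneg (x.2 - v.2)]))
  -- `r • (x - v)` is the orthogonal projection of `w - v` onto the direction `x - v`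
  set r := ((x.1 - v.1) * (w.1 - v.1) + (x.2 - v.2) * (w.2 - v.2)) /
    ((x.1 - v.1) ^ 2 + (x.2 - v.2) ^ 2)
  have hw : w = r • (x - v) + v := by
    simp only [det2] at h
    ext <;> simp only [Prod.fst_add, Prod.snd_add, Prod.smul_fst, Prod.smul_snd, Prod.fst_sub,
      Prod.snd_sub, smul_eq_mul, r] <;> field_simp
    · linear_combination (v.2 - x.2) * h
    · linear_combination (x.1 - v.1) * h
  rw [collinear_iff_of_mem (Set.mem_insert v _)]
  refine ⟨x - v, ?_⟩
  simp only [Set.mem_insert_iff, Set.mem_singleton_iff]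
  rintro p (rfl | rfl | rfl)
  · exact ⟨0, by simp⟩
  · exact ⟨1, by simp⟩
  · exact ⟨r, hw⟩

lemma GeneralPosition.mono {S T : Finset Pt} (h : T ⊆ S) (hgp : GeneralPosition S) :
    GeneralPosition T :=
  fun a ha b hb c hc => hgp a (h ha) b (h hb) c (h hc)

lemma GeneralPosition.det2_ne_zero {T : Finset Pt} (hgp : GeneralPosition T) {a b c : Pt}
    (ha : a ∈ T) (hb : b ∈ T) (hc : c ∈ T) (hab : a ≠ b) (hac : a ≠ c) (hbc : b ≠ c) :
    det2 a b c ≠ 0 :=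
  fun h => hgp a ha b hb c hc hab hac hbc (collinear_of_det2_eq_zero hab.symm h)

lemma HullVertex.exists_linear_separation {T : Finset Pt} {v : Pt} (hv : HullVertex T v) :
    ∃ ν : Pt, ∀ x ∈ T, x ≠ v → 0 < ν.1 * (x.1 - v.1) + ν.2 * (x.2 - v.2) := by
  obtain ⟨f, u, hfv, hfu⟩ := geometric_hahn_banach_point_closed (convex_convexHull ℝ _)
    (T.finite_toSet.sdiff.isClosed_convexHull (𝕜 := ℝ)) hv.2
  have hf : ∀ z : Pt, f z = f (1, 0) * z.1 + f (0, 1) * z.2 := fun z => by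
    have hz : z = z.1 • ((1 : ℝ), (0 : ℝ)) + z.2 • ((0 : ℝ), (1 : ℝ)) := by ext <;> simp
    conv_lhs => rw [hz]
    simp only [map_add, map_smul, smul_eq_mul, mul_comm]
  refine ⟨(f (1, 0), f (0, 1)), fun x hx hxv => ?_⟩
  have := hfu x (subset_convexHull ℝ _ ⟨hx, hxv⟩)
  rw [hf, hf] at *
  dsimp only
  linarith

lemma HullEdge.hullVertex_sdiff {T : Set Pt} {v w : Pt} (h : HullEdge T v w) :
    HullVertex (T \ {v}) w := by
  obtain ⟨-, hw, hvw, hside⟩ := h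
  refine ⟨⟨hw, hvw.symm⟩, fun hc => ?_⟩
  -- all remaining points lie strictly on one side of the line `vw`, which passes through `w`
  obtain ⟨p, q, hw0, hpos⟩ : ∃ p q, det2 p q w = 0 ∧
      ∀ x ∈ T, x ≠ v → x ≠ w → 0 < det2 p q x := by
    rcases hside with hs | hs
    · exact ⟨v, w, det2_self_right v w, hs⟩
    · exact ⟨w, v, det2_self_left w v,
        fun x hx hxv hxw => by rw [det2_swap]; linarith [hs x hx hxv hxw]⟩
  have := convexHull_min (t := {x | 0 < det2 p q x})
    (fun x hx => hpos x hx.1.1 hx.1.2 hx.2) (convex_setOf_det2_pos p q) hc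
  exact this.ne' hw0

lemma HullEdge.not_segCross {T : Set Pt} {v w c d : Pt} (h : HullEdge T v w) (hc : c ∈ T)
    (hd : d ∈ T) (hcv : c ≠ v) (hdv : d ≠ v) (hcd : c ≠ d) : ¬ SegCross v w c d := by
  wlog hcw : c ≠ w generalizing c d
  · rw [segCross_swap_right]
    exact this hd hc hdv hcv hcd.symm (fun hdw => hcw (hdw ▸ hcd))
  obtain ⟨-, -, -, hside⟩ := h
  have hdc : 0 ≤ det2 v w c * det2 v w d := by
    rcases eq_or_ne d w with rfl | hdw
    · simp
    rcases hside with hs | hs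
    · exact (mul_pos (hs c hc hcv hcw) (hs d hd hdv hdw)).le
    · exact (mul_pos_of_neg_of_neg (hs c hc hcv hcw) (hs d hd hdv hdw)).le
  refine not_segCross_of_det2_mul_nonneg hdc ?_
  rcases hside with hs | hs
  · exact (hs c hc hcv hcw).ne'
  · exact (hs c hc hcv hcw).ne

/-- Ordering `T \ {v}` by slope in a frame whose first axis points into the half-plane
containing it, the orientation of `v w x` is the order of `w` and `x`. -/
lemma HullVertex.exists_slope {T : Finset Pt} (hgp : GeneralPosition T) {v : Pt}
    (hv : HullVertex T v) :
    ∃ σ : Pt → ℝ, ∀ w ∈ T.erase v, ∀ x ∈ T.erase v, x ≠ w →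
      σ x ≠ σ w ∧ (σ x < σ w → det2 v w x < 0) ∧ (σ w < σ x → 0 < det2 v w x) := by
  obtain ⟨ν, hν⟩ := hv.exists_linear_separation
  set F : Pt → ℝ := fun x => ν.1 * (x.1 - v.1) + ν.2 * (x.2 - v.2)
  have hF : ∀ x ∈ T.erase v, 0 < F x := fun x hx =>
    hν x (Finset.mem_of_mem_erase hx) (Finset.ne_of_mem_erase hx)
  set σ : Pt → ℝ := fun x => (ν.1 * (x.2 - v.2) - ν.2 * (x.1 - v.1)) / F x
  refine ⟨σ, fun w hw x hx hxw => ?_⟩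
  have hFF := mul_pos (hF w hw) (hF x hx)
  have hN : 0 < ν.1 ^ 2 + ν.2 ^ 2 := by
    by_contra! h
    have h1 : ν.1 = 0 := by nlinarith [sq_nonneg ν.1, sq_nonneg ν.2]
    have h2 : ν.2 = 0 := by nlinarith [sq_nonneg ν.1, sq_nonneg ν.2]
    simp [F, h1, h2] at hFF
  have hdet : (ν.1 ^ 2 + ν.2 ^ 2) * det2 v w x = F w * F x * (σ x - σ w) := by
    have := (hF w hw).ne'
    have := (hF x hx).ne'
    simp only [σ, det2]
    field_simp
    ring
  refine ⟨fun h => ?_, fun h => ?_, fun h => ?_⟩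
  · rw [h, sub_self, mul_zero] at hdet
    exact hgp.det2_ne_zero hv.1 (Finset.mem_of_mem_erase hw) (Finset.mem_of_mem_erase hx)
      (Finset.ne_of_mem_erase hw).symm (Finset.ne_of_mem_erase hx).symm hxw.symm
      ((mul_eq_zero.1 hdet).resolve_left hN.ne')
  · refine neg_of_mul_neg_right ?_ hN.le
    rw [hdet]
    exact mul_neg_of_pos_of_neg hFF (sub_neg.2 h)
  · refine pos_of_mul_pos_right ?_ hN.le
    rw [hdet]
    exact mul_pos hFF (sub_pos.2 h)

lemma exists_two_hullEdges {T : Finset Pt} (hgp : GeneralPosition T) {v : Pt}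
    (hv : HullVertex T v) (hne : (T.erase v).Nonempty) :
    ∃ w₁ w₂ : Pt, HullEdge T v w₁ ∧ HullEdge T v w₂ ∧ (2 ≤ (T.erase v).card → w₁ ≠ w₂) := by
  obtain ⟨σ, hσ⟩ := hv.exists_slope hgp
  obtain ⟨w₁, hw₁, hmax⟩ := Finset.exists_max_image (T.erase v) σ hne
  obtain ⟨w₂, hw₂, hmin⟩ := Finset.exists_min_image (T.erase v) σ hne
  have h₁ : ∀ x ∈ T.erase v, x ≠ w₁ → det2 v w₁ x < 0 := fun x hx hxw =>
    (hσ w₁ hw₁ x hx hxw).2.1 ((hmax x hx).lt_of_ne (hσ w₁ hw₁ x hx hxw).1)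
  have h₂ : ∀ x ∈ T.erase v, x ≠ w₂ → 0 < det2 v w₂ x := fun x hx hxw =>
    (hσ w₂ hw₂ x hx hxw).2.2 ((hmin x hx).lt_of_ne (hσ w₂ hw₂ x hx hxw).1.symm)
  refine ⟨w₁, w₂, ⟨hv.1, Finset.mem_of_mem_erase hw₁, (Finset.ne_of_mem_erase hw₁).symm,
      Or.inr fun x hx hxv => h₁ x (Finset.mem_erase.2 ⟨hxv, hx⟩)⟩,
    ⟨hv.1, Finset.mem_of_mem_erase hw₂, (Finset.ne_of_mem_erase hw₂).symm,
      Or.inl fun x hx hxv => h₂ x (Finset.mem_erase.2 ⟨hxv, hx⟩)⟩, ?_⟩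
  rintro hcard rfl
  obtain ⟨x, hx, hxw⟩ := Finset.exists_mem_ne hcard w₁
  exact (h₁ x hx hxw).not_gt (h₂ x hx hxw)

/-- By Krein–Milman the hull of `S` is the hull of its extreme points, so these cannot all
coincide when `S` has two points. -/
lemma exists_two_hullVertices {S : Finset Pt} (hS : 2 ≤ S.card) :
    ∃ a b : Pt, HullVertex S a ∧ HullVertex S b ∧ a ≠ b := by
  set K := convexHull ℝ (S : Set Pt)
  have hK : IsCompact K := S.finite_toSet.isCompact_convexHull (𝕜 := ℝ)
  have hext : ∀ x ∈ K.extremePoints ℝ, HullVertex S x := fun x hx =>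
    ⟨extremePoints_convexHull_subset hx, fun h =>
      ((convex_convexHull ℝ _).mem_extremePoints_iff_mem_sdiff_convexHull_sdiff.1 hx).2
        (convexHull_mono (Set.sdiff_subset_sdiff_left (subset_convexHull ℝ _)) h)⟩
  obtain ⟨x, hx, y, hy, hxy⟩ := Finset.one_lt_card.1 hS
  obtain ⟨a, ha⟩ := hK.extremePoints_nonempty ⟨x, subset_convexHull ℝ _ hx⟩
  by_contra! h
  have hsub : K ⊆ {a} := by
    rw [← closure_convexHull_extremePoints hK (convex_convexHull ℝ _)]
    refine closure_minimal (convexHull_min (fun b hb => ?_) (convex_singleton a))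
      isClosed_singleton
    exact (h a b (hext a ha) (hext b hb)).symm
  exact hxy ((hsub (subset_convexHull ℝ _ hx)).trans (hsub (subset_convexHull ℝ _ hy)).symm)

section Peeling

variable {S : Finset Pt} {v : ℕ → Pt}

@[simp] lemma peelRest_zero : PeelRest S v 0 = S := by
  simp [PeelRest]

lemma peelRest_succ (i : ℕ) : PeelRest S v (i + 1) = PeelRest S v i \ {v i} := by
  ext x
  simp only [PeelRest, Set.mem_ofPred_eq, Set.mem_sdiff, Set.mem_singleton_iff, Nat.lt_succ_iff,
    le_iff_lt_or_eq, or_imp, forall_and, forall_eq, and_assoc, ne_comm]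

lemma peelRest_antitone : Antitone (PeelRest S v) :=
  antitone_nat_of_succ_le fun i => by rw [peelRest_succ]; exact Set.sdiff_subset

lemma isGenPeelingSeq_of_hullEdge (h0 : HullVertex S (v 0))
    (hedge : ∀ i, i + 1 < S.card → HullEdge (PeelRest S v i) (v i) (v (i + 1))) :
    IsGenPeelingSeq S S.card v := by
  have hmem : ∀ i < S.card, v i ∈ PeelRest S v i := by
    intro i hi
    induction i with
    | zero => simpa using h0.1
    | succ i _ =>
      obtain ⟨-, hw, hvw, -⟩ := hedge i hi
      rw [peelRest_succ]
      exact ⟨hw, hvw.symm⟩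
  have hne : ∀ i j, i < j → j < S.card → v i ≠ v j := fun i j hij hj => (hmem j hj).2 i hij
  have hinj : ∀ i < S.card, ∀ j < S.card, v i = v j → i = j := by
    intro i hi j hj h
    by_contra hij
    rcases lt_or_gt_of_ne hij with hij | hij
    · exact hne i j hij hj h
    · exact hne j i hij hi h.symm
  have hlater : ∀ i j, i < j → j < S.card → v j ∈ PeelRest S v i \ {v i} := fun i j hij hj => by
    rw [← peelRest_succ]
    exact peelRest_antitone hij (hmem j hj)
  refine ⟨fun i hi => (hmem i hi).1, hinj, ?_, ?_, h0, fun i hi0 hi => ?_⟩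
  · have hsurj := Finset.surj_on_of_inj_on_of_card_le (s := Finset.range S.card) (t := S)
      (fun i hi => v i) (fun i hi => (hmem i (Finset.mem_range.1 hi)).1)
      (fun i j hi hj => hinj i (Finset.mem_range.1 hi) j (Finset.mem_range.1 hj)) (by simp)
    intro x hx
    obtain ⟨i, hi, rfl⟩ := hsurj x hx
    exact ⟨i, Finset.mem_range.1 hi, rfl⟩
  · intro i j hi hj hij
    wlog hlt : i < j generalizing i j
    · rw [segCross_comm]
      exact this j i hj hi hij.symm (lt_of_le_of_ne (not_lt.1 hlt) hij.symm)
    obtain ⟨hc, hcv⟩ := hlater i j hlt (by omega)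
    obtain ⟨hd, hdv⟩ := hlater i (j + 1) (by omega) hj
    exact (hedge i hi).not_segCross hc hd hcv hdv (hne j (j + 1) (by omega) hj)
  · obtain ⟨i, rfl⟩ : ∃ m, i = m + 1 := ⟨i - 1, by omega⟩
    rw [Nat.add_sub_cancel, peelRest_succ]
    refine ⟨(hedge i hi).hullVertex_sdiff, fun a b hab => ?_⟩
    obtain ⟨⟨ha, hav⟩, ⟨hb, hbv⟩, hab, -⟩ := hab
    exact (hedge i hi).not_segCross ha hb hav hbv hab

end Peeling

section Construction

lemma exists_bool_fun_injective_of_ne {α : Type*} {P : α → Prop} {a b : α} (ha : P a)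
    (hb : P b) : ∃ f : Bool → α, (∀ c, P (f c)) ∧ (a ≠ b → Function.Injective f) := by
  refine ⟨fun c => bif c then a else b, fun c => by cases c <;> assumption, fun hab => ?_⟩
  intro c d h
  cases c <;> cases d <;> simp_all [eq_comm]

noncomputable def hullStart (S : Finset Pt) : Bool → Pt :=
  Classical.epsilon fun f => (∀ c, HullVertex S (f c)) ∧ Function.Injective f

noncomputable def hullNbr (T : Finset Pt) (v : Pt) : Bool → Pt :=
  Classical.epsilon fun f =>
    (∀ c, HullEdge T v (f c)) ∧ (2 ≤ (T.erase v).card → Function.Injective f)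

lemma hullStart_spec {S : Finset Pt} (hS : 2 ≤ S.card) :
    (∀ c, HullVertex S (hullStart S c)) ∧ Function.Injective (hullStart S) := by
  obtain ⟨a, b, ha, hb, hab⟩ := exists_two_hullVertices hS
  obtain ⟨f, hf, hinj⟩ := exists_bool_fun_injective_of_ne ha hb
  exact Classical.epsilon_spec (p := fun f : Bool → Pt =>
    (∀ c, HullVertex S (f c)) ∧ Function.Injective f) ⟨f, hf, hinj hab⟩

lemma hullNbr_spec {T : Finset Pt} (hgp : GeneralPosition T) {v : Pt} (hv : HullVertex T v)
    (hne : (T.erase v).Nonempty) :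
    (∀ c, HullEdge T v (hullNbr T v c)) ∧
      (2 ≤ (T.erase v).card → Function.Injective (hullNbr T v)) := by
  obtain ⟨a, b, ha, hb, hab⟩ := exists_two_hullEdges hgp hv hne
  obtain ⟨f, hf, hinj⟩ := exists_bool_fun_injective_of_ne ha hb
  exact Classical.epsilon_spec (p := fun f : Bool → Pt =>
    (∀ c, HullEdge T v (f c)) ∧ (2 ≤ (T.erase v).card → Function.Injective f))
    ⟨f, hf, fun h => hinj (hab h)⟩

/-- The unpeeled points and the current vertex after `i` steps; `b i` chooses between the two
options offered at step `i`. -/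
noncomputable def peelState (S : Finset Pt) (b : ℕ → Bool) : ℕ → Finset Pt × Pt
  | 0 => (S, hullStart S (b 0))
  | i + 1 =>
    ((peelState S b i).1.erase (peelState S b i).2,
      hullNbr (peelState S b i).1 (peelState S b i).2 (b (i + 1)))

noncomputable def peelWalk (S : Finset Pt) (b : ℕ → Bool) (i : ℕ) : Pt :=
  (peelState S b i).2

variable {S : Finset Pt} {b c : ℕ → Bool}

lemma peelState_congr {i : ℕ} (h : ∀ j ≤ i, b j = c j) : peelState S b i = peelState S c i := by
  induction i with
  | zero => simp [peelState, h 0 le_rfl]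
  | succ i ih => simp only [peelState, ih fun j hj => h j (by omega), h (i + 1) le_rfl]

lemma coe_peelState_fst (i : ℕ) : ((peelState S b i).1 : Set Pt) = PeelRest S (peelWalk S b) i := by
  induction i with
  | zero => simp [peelState]
  | succ i ih => simp [peelState, peelRest_succ, ← ih, peelWalk]

lemma peelState_fst_subset (i : ℕ) : (peelState S b i).1 ⊆ S := fun x hx => by
  have : x ∈ ((peelState S b i).1 : Set Pt) := hx
  rw [coe_peelState_fst] at this
  exact this.1

lemma peelState_spec (hgp : GeneralPosition S) (hS : 2 ≤ S.card) {i : ℕ} (hi : i < S.card) :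
    (peelState S b i).1.card = S.card - i ∧ HullVertex (peelState S b i).1 (peelState S b i).2 := by
  induction i with
  | zero => exact ⟨rfl, (hullStart_spec hS).1 _⟩
  | succ i ih =>
    obtain ⟨hcard, hv⟩ := ih (by omega)
    have hcard' : ((peelState S b i).1.erase (peelState S b i).2).card = S.card - (i + 1) := by
      rw [Finset.card_erase_of_mem hv.1, hcard]; omega
    refine ⟨hcard', ?_⟩
    have := ((hullNbr_spec (hgp.mono (peelState_fst_subset i)) hv
      (by rw [← Finset.card_pos, hcard']; omega)).1 (b (i + 1))).hullVertex_sdiff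
    simpa [peelState] using this

lemma hullNbr_peelState_spec (hgp : GeneralPosition S) (hS : 2 ≤ S.card) {i : ℕ}
    (hi : i + 1 < S.card) :
    (∀ c, HullEdge (peelState S b i).1 (peelState S b i).2
      (hullNbr (peelState S b i).1 (peelState S b i).2 c)) ∧
    (i + 2 < S.card → Function.Injective (hullNbr (peelState S b i).1 (peelState S b i).2)) := by
  obtain ⟨hcard, hv⟩ := peelState_spec (b := b) hgp hS (i := i) (by omega)
  have hcard' : ((peelState S b i).1.erase (peelState S b i).2).card = S.card - (i + 1) := by
    rw [Finset.card_erase_of_mem hv.1, hcard]; omega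
  exact (hullNbr_spec (hgp.mono (peelState_fst_subset i)) hv
    (by rw [← Finset.card_pos, hcard']; omega)).imp_right fun h _ => h (by omega)

lemma hullEdge_peelWalk (hgp : GeneralPosition S) (hS : 2 ≤ S.card) {i : ℕ} (hi : i + 1 < S.card) :
    HullEdge (PeelRest S (peelWalk S b) i) (peelWalk S b i) (peelWalk S b (i + 1)) := by
  rw [← coe_peelState_fst]
  exact (hullNbr_peelState_spec hgp hS hi).1 _

lemma isGenPeelingSeq_peelWalk (hgp : GeneralPosition S) (hS : 2 ≤ S.card) :
    IsGenPeelingSeq S S.card (peelWalk S b) :=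
  isGenPeelingSeq_of_hullEdge ((hullStart_spec hS).1 _)
    fun _ hi => hullEdge_peelWalk hgp hS hi

lemma eq_of_peelWalk_eq (hgp : GeneralPosition S) (hS : 2 ≤ S.card)
    (h : ∀ i < S.card, peelWalk S b i = peelWalk S c i) : ∀ i, i + 1 < S.card → b i = c i := by
  intro i
  induction i using Nat.strong_induction_on with
  | _ i ih =>
    intro hi
    cases i with
    | zero => exact (hullStart_spec hS).2 (h 0 (by omega))
    | succ k =>
      have hstate : peelState S b k = peelState S c k :=
        peelState_congr fun j hj => ih j (by omega) (by omega)
      refine (hullNbr_peelState_spec (b := b) hgp hS (i := k) (by omega)).2 hi ?_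
      have := h (k + 1) (by omega)
      simp only [peelWalk, peelState] at this
      rwa [← hstate] at this

end Construction

/-- For `S` a set of `n ≥ 2` points in general position, there are at least
`2 ^ (n - 1)` generalized peeling paths on `S`, counted as oriented plane spanning paths. -/
theorem many_generalized_peeling_paths (S : Finset Pt) (hgp : GeneralPosition S)
    (n : ℕ) (hn : S.card = n) (h2 : 2 ≤ n) :
    2 ^ (n - 1) ≤
      {w : Fin n → Pt | ∃ v : ℕ → Pt, (∀ i : Fin n, v i.1 = w i) ∧
        IsGenPeelingSeq S n v}.ncard := by
  subst hn
  let steer : (Fin (S.card - 1) → Bool) → ℕ → Bool :=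
    fun β j => if h : j < S.card - 1 then β ⟨j, h⟩ else false
  let walk : (Fin (S.card - 1) → Bool) → Fin S.card → Pt := fun β i => peelWalk S (steer β) i
  have hinj : Function.Injective walk := fun β γ h => funext fun j => by
    have := eq_of_peelWalk_eq hgp h2 (fun i hi => congrFun h ⟨i, hi⟩) j (by omega)
    simpa [steer, j.2] using this
  have hfin : {w : Fin S.card → Pt | ∃ v : ℕ → Pt, (∀ i : Fin S.card, v i.1 = w i) ∧
      IsGenPeelingSeq S S.card v}.Finite :=
    (Set.Finite.pi fun _ => S.finite_toSet).subset fun w ⟨v, hvw, hv⟩ i _ => hvw i ▸ hv.1 i i.2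
  calc 2 ^ (S.card - 1) = (Set.range walk).ncard := by
        rw [Set.ncard_range_of_injective hinj]; simp
    _ ≤ _ := Set.ncard_le_ncard
        (by rintro _ ⟨β, rfl⟩; exact ⟨_, fun i => rfl, isGenPeelingSeq_peelWalk hgp h2⟩) hfin
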